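/- arXiv:1810.07586 — 2 statements merged into one kernel-verified Lean document; each statement's English description precedes it below -/
import Mathlib

section
/- Let n ≥ 2 and let τ_1, …, τ_{n-1} be transpositions of {1, …, n}. The left-to-right product τ_1 τ_2 ⋯ τ_{n-1} is an n-cycle (i.e., a cyclic permutation acting transitively on all of {1, …, n}) if and only if the simple graph on vertex set {1, …, n}, in which distinct i and j are adjacent precisely when some τ_k exchanges i and j, is connected. -/
/-!
Multiplying a permutation `f` by a transposition `(a b)` merges the cycles of `a` and `b` when
they are different cycles of `f`, and every cycle of a product of transpositions lies inside a
connected component of their graph. A connected graph on `n` vertices with `n - 1` edges is a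
tree, so when the transpositions are multiplied in one at a time, each new one joins two
different components, which by induction are two different cycles of the partial product. Hence
the cycles of the full product are exactly the connected components of the graph.
-/

open Equiv Equiv.Perm SimpleGraph

namespace Equiv.Perm

variable {α : Type*} {f : Perm α} {r : α → α → Prop} {x y : α}

theorem SameCycle.rel_of_forall_rel_apply (hr : Equivalence r) (h : ∀ u, r u (f u))
    (hxy : f.SameCycle x y) : r x y := by
  obtain ⟨i, rfl⟩ := hxy
  induction i using Int.induction_on with
  | zero => exact hr.refl x
  | succ i ih => rw [add_comm, zpow_one_add, mul_apply]; exact hr.trans ih (h _)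
  | pred i ih =>
    rw [sub_eq_neg_add, zpow_add, zpow_neg_one, mul_apply]
    have hinv : r (f⁻¹ ((f ^ (-i : ℤ)) x)) ((f ^ (-i : ℤ)) x) := by
      simpa only [Perm.inv_def, apply_symm_apply] using h (f⁻¹ ((f ^ (-i : ℤ)) x))
    exact hr.trans ih (hr.symm hinv)

theorem _root_.List.rel_prod_apply (hr : Equivalence r) {l : List (Perm α)}
    (h : ∀ p ∈ l, ∀ u, r u (p u)) (u : α) : r u (l.prod u) := by
  induction l generalizing u with
  | nil => exact hr.refl u
  | cons p l ih =>
    simp only [List.forall_mem_cons] at h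
    exact hr.trans (ih h.2 u) (h.1 _)

variable [DecidableEq α] {a b : α}

theorem sameCycle_swap_mul_of_not_sameCycle [Finite α] (h : ¬f.SameCycle a b) :
    (swap a b * f).SameCycle a b := by
  set g := swap a b * f
  -- `g` agrees with `f` along the `f`-orbit of `b`, which avoids `a`, until `f⁻¹ b ↦ a`.
  have orbit : ∀ j : ℕ, g.SameCycle b ((f ^ j) b) := by
    intro j
    induction j with
    | zero => exact SameCycle.rfl
    | succ j ih =>
      rw [pow_succ', mul_apply]
      by_cases hb : f ((f ^ j) b) = b
      · rw [hb]
      have ha : f ((f ^ j) b) ≠ a := fun ha =>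
        h (by rw [← ha, sameCycle_apply_left, sameCycle_pow_left])
      have : g ((f ^ j) b) = f ((f ^ j) b) := by
        simp [g, swap_apply_of_ne_of_ne ha hb]
      rw [← this, sameCycle_apply_right]
      exact ih
  obtain ⟨j, -, hj⟩ := (sameCycle_symm_apply_right.2 SameCycle.rfl :
    f.SameCycle b (f.symm b)).exists_pow_eq'
  have hg : g (f.symm b) = a := by simp [g]
  exact (hg ▸ sameCycle_apply_right.2 (hj ▸ orbit j)).symm

theorem SameCycle.swap_mul (hab : (swap a b * f).SameCycle a b) (hxy : f.SameCycle x y) :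
    (swap a b * f).SameCycle x y := by
  set g := swap a b * f
  refine hxy.rel_of_forall_rel_apply (SameCycle.equivalence g) fun u => ?_
  have hu : g.SameCycle u (g u) := sameCycle_apply_right.2 SameCycle.rfl
  have hfu : f u = swap a b (g u) := by simp [g]
  rw [hfu, swap_apply_def]
  split_ifs with ha hb
  · exact (ha ▸ hu).trans hab
  · exact (hb ▸ hu).trans hab.symm
  · exact hu

theorem isCycle_and_support_eq_univ_iff [Fintype α] [Nontrivial α] :
    f.IsCycle ∧ f.support = Finset.univ ↔ ∀ x y, f.SameCycle x y := by
  constructor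
  · rintro ⟨hf, hs⟩ x y
    exact hf.sameCycle (mem_support.1 (hs ▸ Finset.mem_univ x))
      (mem_support.1 (hs ▸ Finset.mem_univ y))
  · intro h
    have hmove : ∀ x, f x ≠ x := fun x hx => by
      obtain ⟨y, hy⟩ := exists_ne x
      exact hy ((h x y).eq_of_left hx).symm
    obtain ⟨x⟩ := (inferInstance : Nonempty α)
    exact ⟨⟨x, hmove x, fun y _ => h x y⟩,
      Finset.eq_univ_of_forall fun y => mem_support.2 (hmove y)⟩

end Equiv.Perm

namespace SimpleGraph

variable {V : Type*} {G : SimpleGraph V} {r : V → V → Prop} {a b x y : V}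

theorem Reachable.rel_of_adj (hr : Equivalence r) (h : ∀ ⦃u v⦄, G.Adj u v → r u v)
    (hxy : G.Reachable x y) : r x y := by
  rw [reachable_iff_reflTransGen] at hxy
  induction hxy with
  | refl => exact hr.refl x
  | tail _ huv ih => exact hr.trans ih (h huv)

theorem Reachable.rel_of_sup_edge (hr : Equivalence r) (h : ∀ ⦃u v⦄, G.Adj u v → r u v)
    (hab : r a b) (hxy : (G ⊔ edge a b).Reachable x y) : r x y := by
  refine hxy.rel_of_adj hr fun u v huv => ?_
  rcases huv with huv | huv
  · exact h huv
  · obtain ⟨⟨rfl, rfl⟩ | ⟨rfl, rfl⟩, -⟩ := (edge_adj ..).1 huv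
    exacts [hab, hr.symm hab]

theorem Connected.of_sup_edge (hc : (G ⊔ edge a b).Connected) (hab : G.Reachable a b) :
    G.Connected :=
  have : Nonempty V := hc.nonempty
  ⟨fun x y => (hc.preconnected x y).rel_of_sup_edge (reachable_is_equivalence _)
    (fun _ _ huv => huv.reachable) hab⟩

def ofPerms (l : List (Perm V)) : SimpleGraph V :=
  fromRel fun x y => ∃ p ∈ l, p x = y

theorem ofPerms_mono {l m : List (Perm V)} (h : l ⊆ m) : ofPerms l ≤ ofPerms m := by
  intro x y
  simp only [ofPerms, fromRel_adj]
  rintro ⟨hxy, ⟨p, hp, hpxy⟩ | ⟨p, hp, hpyx⟩⟩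
  exacts [⟨hxy, .inl ⟨p, h hp, hpxy⟩⟩, ⟨hxy, .inr ⟨p, h hp, hpyx⟩⟩]

theorem ofPerms_congr {l m : List (Perm V)} (h : l.Perm m) : ofPerms l = ofPerms m :=
  le_antisymm (ofPerms_mono h.subset) (ofPerms_mono h.symm.subset)

theorem reachable_ofPerms_apply {l : List (Perm V)} {p : Perm V} (hp : p ∈ l) (x : V) :
    (ofPerms l).Reachable x (p x) := by
  by_cases hx : x = p x
  · rw [← hx]
  · exact Adj.reachable ((fromRel_adj _ _ _).2 ⟨hx, .inl ⟨p, hp, rfl⟩⟩)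

theorem _root_.Equiv.Perm.SameCycle.reachable_ofPerms {l : List (Perm V)}
    (h : l.prod.SameCycle x y) : (ofPerms l).Reachable x y :=
  h.rel_of_forall_rel_apply (reachable_is_equivalence _)
    (l.rel_prod_apply (reachable_is_equivalence _) fun _ hp => reachable_ofPerms_apply hp)

theorem ofPerms_nil : ofPerms ([] : List (Perm V)) = ⊥ := by
  ext
  simp [ofPerms]

variable [DecidableEq V]

theorem ofPerms_cons_swap (l : List (Perm V)) (a b : V) :
    ofPerms (swap a b :: l) = ofPerms l ⊔ edge a b := by
  ext x y
  simp only [ofPerms, fromRel_adj, sup_adj, edge_adj, List.mem_cons, or_and_right, exists_or,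
    exists_eq_left]
  grind

theorem card_edgeSet_ofPerms_le {l : List (Perm V)} (h : ∀ p ∈ l, p.IsSwap) :
    Nat.card (ofPerms l).edgeSet ≤ l.length := by
  induction l with
  | nil => simp [ofPerms_nil]
  | cons p l ih =>
    obtain ⟨a, b, hab, rfl⟩ := h p List.mem_cons_self
    have hl := ih fun q hq => h q (List.mem_cons_of_mem _ hq)
    rw [ofPerms_cons_swap, edgeSet_sup, Nat.card_coe_set_eq, List.length_cons]
    calc _ ≤ (ofPerms l).edgeSet.ncard + (edge a b).edgeSet.ncard := Set.ncard_union_le _ _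
      _ ≤ l.length + 1 := by
        rw [← Nat.card_coe_set_eq, edgeSet_edge_of_ne hab, Set.ncard_singleton]
        omega

theorem card_le_length_add_one_of_connected_ofPerms {l : List (Perm V)}
    (h : ∀ p ∈ l, p.IsSwap) (hc : (ofPerms l).Connected) : Nat.card V ≤ l.length + 1 :=
  hc.card_vert_le_card_edgeSet_add_one.trans (by have := card_edgeSet_ofPerms_le h; omega)

theorem not_reachable_ofPerms_of_connected {s t : List (Perm V)}
    (hswap : ∀ p ∈ s ++ swap a b :: t, p.IsSwap) (hc : (ofPerms (s ++ swap a b :: t)).Connected)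
    (hcard : Nat.card V = (s ++ swap a b :: t).length + 1) : ¬(ofPerms t).Reachable a b := by
  -- Otherwise dropping `swap a b` leaves a connected graph with too few edges.
  intro hab
  rw [ofPerms_congr List.perm_middle, ofPerms_cons_swap] at hc
  have hst := card_le_length_add_one_of_connected_ofPerms (l := s ++ t)
    (fun p hp => hswap p (List.perm_middle.symm.subset (List.mem_cons_of_mem _ hp)))
    (hc.of_sup_edge (hab.mono (ofPerms_mono (List.subset_append_right s t))))
  simp only [List.length_append, List.length_cons] at hcard hst
  omega

theorem sameCycle_prod_iff_reachable_ofPerms [Finite V] {s l : List (Perm V)}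
    (hswap : ∀ p ∈ s ++ l, p.IsSwap) (hc : (ofPerms (s ++ l)).Connected)
    (hcard : Nat.card V = (s ++ l).length + 1) (x y : V) :
    l.prod.SameCycle x y ↔ (ofPerms l).Reachable x y := by
  -- `s` holds the swaps already peeled off the front of the list.
  induction l generalizing s x y with
  | nil => simp [ofPerms_nil]
  | cons p t ih =>
    obtain ⟨a, b, -, rfl⟩ := hswap p (by simp)
    have hs : s ++ swap a b :: t = (s ++ [swap a b]) ++ t := by simp
    have ih' := ih (s := s ++ [swap a b]) (hs ▸ hswap) (hs ▸ hc) (hs ▸ hcard)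
    have hab : (swap a b * t.prod).SameCycle a b := sameCycle_swap_mul_of_not_sameCycle
      fun h => not_reachable_ofPerms_of_connected hswap hc hcard ((ih' a b).1 h)
    refine ⟨SameCycle.reachable_ofPerms, fun h => ?_⟩
    rw [ofPerms_cons_swap] at h
    rw [List.prod_cons]
    exact h.rel_of_sup_edge (SameCycle.equivalence _)
      (fun u v huv => hab.swap_mul ((ih' u v).2 huv.reachable)) hab

end SimpleGraph

/-- `(List.ofFn τ).reverse.prod` is `τ₁ τ₂ ⋯ τ_{n-1}` in the left-to-right convention, since the
product of `Equiv.Perm` applies its right factor first. -/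
theorem product_is_cycle_iff_graph_connected (n : ℕ) (hn : 2 ≤ n)
    (τ : Fin (n - 1) → Equiv.Perm (Fin n)) (hτ : ∀ k, (τ k).IsSwap) :
    ((List.ofFn τ).reverse.prod.IsCycle ∧
        (List.ofFn τ).reverse.prod.support = Finset.univ) ↔
      (SimpleGraph.fromRel fun i j : Fin n => ∃ k, τ k i = j).Connected := by
  have : Nontrivial (Fin n) := Fin.nontrivial_iff_two_le.2 hn
  have hG : (fromRel fun i j : Fin n => ∃ k, τ k i = j) = ofPerms (List.ofFn τ).reverse := by
    simp [ofPerms, List.mem_ofFn]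
  have hswap : ∀ p ∈ [] ++ (List.ofFn τ).reverse, p.IsSwap := by
    simpa [List.mem_ofFn] using hτ
  rw [isCycle_and_support_eq_univ_iff, hG]
  refine ⟨fun h => ⟨fun x y => (h x y).reachable_ofPerms⟩, fun hc x y => ?_⟩
  have hcard : Nat.card (Fin n) = ([] ++ (List.ofFn τ).reverse).length + 1 := by
    simp only [Nat.card_eq_fintype_card, Fintype.card_fin, List.nil_append, List.length_reverse,
      List.length_ofFn]
    omega
  exact (sameCycle_prod_iff_reachable_ofPerms hswap hc hcard x y).2 (hc.preconnected x y)
end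

section
/- For every n ≥ 2 there exists a bijection B : 𝔐_n → 𝔐_n such that for every F ∈ 𝔐_n and every 1 ≤ i ≤ n, one has M_i(F) = T_i(B(F)) and T_i(F) = M_{i-1}(B(F)), where by convention the index i-1 is taken to be n when i = 1. -/
/-- `F` is a minimal factorization of size `n`, i.e. a factorization of the cycle
`(1,2,…,n)` (represented as `finRotate n` on `Fin n`, where the element `i ∈ {1,…,n}`
corresponds to the index `i-1 : Fin n`) into `n-1` transpositions: each `F k` is a
transposition and the left-to-right product `τ₁ τ₂ ⋯ τ_{n-1}` (apply `τ₁` first)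
equals the cycle. -/
def IsMinFact (n : ℕ) (F : Fin (n - 1) → Equiv.Perm (Fin n)) : Prop :=
  (∀ k, (F k).IsSwap) ∧ (List.ofFn F).reverse.prod = finRotate n

/-- `T(F, x)`: the number of transpositions in `F` moving the element represented by `x`. -/
def Tcount {n : ℕ} (F : Fin (n - 1) → Equiv.Perm (Fin n)) (x : Fin n) : ℕ :=
  (Finset.univ.filter fun k : Fin (n - 1) => F k x ≠ x).card

/-- `M(F, x)`: the number of indices `1 ≤ k ≤ n-1` with `τ₁⋯τ_{k-1}(x) ≠ τ₁⋯τ_k(x)`,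
i.e. the number of transpositions affecting the trajectory of `x` (left-to-right
partial products, so `τ₁⋯τ_k` is the product of the first `k` entries, applied
`τ₁` first). -/
def Mcount {n : ℕ} (F : Fin (n - 1) → Equiv.Perm (Fin n)) (x : Fin n) : ℕ :=
  (Finset.univ.filter fun k : Fin (n - 1) =>
    ((List.ofFn F).take k.val).reverse.prod x ≠
      ((List.ofFn F).take (k.val + 1)).reverse.prod x).card

/-!
Write `π_j = τ₁ ⋯ τ_j` for the prefix products of `F` and let `B(F)` be `F` read backwards with
each `τ_j` replaced by its conjugate `π_{j-1}⁻¹ τ_j π_{j-1}`. The prefix products of `B(F)` are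
`π_{n-1-k}⁻¹ c_n`, so `B(F)` is again a minimal factorization, its `k`-th transposition moves `x`
exactly when the `(n-1-k)`-th transposition of `F` moves the trajectory of `x`, and the trajectory
of `x` under `B(F)` moves at step `k` exactly when `τ_{n-1-k}` moves `c_n(x)`. Applying `B` twice
conjugates every `τ_j` by `c_n`, so `B` is injective, hence bijective on the finite set `𝔐_n`.
-/

open Finset

section Dual

variable {α : Type*} {m : ℕ}

def prefixProd (F : Fin m → Equiv.Perm α) (j : ℕ) : Equiv.Perm α :=
  ((List.ofFn F).take j).reverse.prod

lemma prefixProd_zero (F : Fin m → Equiv.Perm α) : prefixProd F 0 = 1 := by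
  simp [prefixProd]

lemma prefixProd_succ (F : Fin m → Equiv.Perm α) (k : Fin m) :
    prefixProd F (k + 1) = F k * prefixProd F k := by
  simp [prefixProd, List.take_add_one]

lemma prefixProd_length (F : Fin m → Equiv.Perm α) :
    prefixProd F m = (List.ofFn F).reverse.prod := by
  rw [prefixProd, List.take_of_length_le (by simp)]

def dual (F : Fin m → Equiv.Perm α) : Fin m → Equiv.Perm α :=
  fun k => (prefixProd F k.rev)⁻¹ * F k.rev * prefixProd F k.rev

lemma prefixProd_dual (F : Fin m → Equiv.Perm α) {j : ℕ} (hj : j ≤ m) :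
    prefixProd (dual F) j = (prefixProd F (m - j))⁻¹ * prefixProd F m := by
  induction j with
  | zero => simp [prefixProd_zero]
  | succ j ih =>
    let k : Fin m := ⟨j, hj⟩
    have hrev : m - j = k.rev + 1 := by simp [k, Fin.val_rev]; omega
    have hrev' : m - (j + 1) = k.rev := by simp [k, Fin.val_rev]
    rw [prefixProd_succ (dual F) k, ih (by omega), hrev, hrev', prefixProd_succ, dual]
    group

lemma prefixProd_dual_length (F : Fin m → Equiv.Perm α) :
    prefixProd (dual F) m = prefixProd F m := by
  simp [prefixProd_dual F le_rfl, prefixProd_zero]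

lemma dual_dual (F : Fin m → Equiv.Perm α) (k : Fin m) :
    dual (dual F) k = (prefixProd F m)⁻¹ * F k * prefixProd F m := by
  have hrev : m - k.rev = k + 1 := by simp [Fin.val_rev]; omega
  rw [dual, prefixProd_dual F k.rev.is_le', hrev, dual, Fin.rev_rev, prefixProd_succ]
  group

lemma dual_injective : Function.Injective (dual : (Fin m → Equiv.Perm α) → _) := by
  intro F G h
  have hprod : prefixProd F m = prefixProd G m := by
    rw [← prefixProd_dual_length F, h, prefixProd_dual_length]
  funext k
  have hk := dual_dual F k
  rw [h, dual_dual, hprod] at hk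
  simpa using hk.symm

lemma dual_apply_ne_iff (F : Fin m → Equiv.Perm α) (k : Fin m) (x : α) :
    dual F k x ≠ x ↔ prefixProd F k.rev x ≠ prefixProd F (k.rev + 1) x := by
  rw [prefixProd_succ, dual, Equiv.Perm.mul_apply, Equiv.Perm.mul_apply, Equiv.Perm.mul_apply,
    ne_eq, ne_eq, Equiv.Perm.inv_eq_iff_eq, eq_comm]

lemma prefixProd_dual_apply_ne_iff (F : Fin m → Equiv.Perm α) (k : Fin m) (x : α) :
    prefixProd (dual F) k x ≠ prefixProd (dual F) (k + 1) x ↔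
      F k.rev (prefixProd F m x) ≠ prefixProd F m x := by
  have hrev : m - k = k.rev + 1 := by simp [Fin.val_rev]; omega
  have hrev' : m - (k + 1) = k.rev := by simp [Fin.val_rev]
  rw [prefixProd_dual F k.is_le', prefixProd_dual F k.is_lt, hrev, hrev', prefixProd_succ]
  simp only [mul_inv_rev, Equiv.Perm.mul_apply, ne_eq, EmbeddingLike.apply_eq_iff_eq,
    Equiv.Perm.inv_eq_iff_eq]
  exact not_congr eq_comm

end Dual

lemma card_filter_rev {m : ℕ} (p : Fin m → Prop) [DecidablePred p] :
    #{k | p (Fin.rev k)} = #{k | p k} :=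
  card_nbij' Fin.rev Fin.rev (fun _ => by simp) (fun _ => by simp) (fun _ _ => by simp)
    (fun _ _ => by simp)

lemma isMinFact_dual {n : ℕ} {F : Fin (n - 1) → Equiv.Perm (Fin n)} (hF : IsMinFact n F) :
    IsMinFact n (dual F) := by
  refine ⟨fun k => ?_, ?_⟩
  · obtain ⟨a, b, hab, hswap⟩ := hF.1 k.rev
    refine ⟨(prefixProd F k.rev)⁻¹ a, (prefixProd F k.rev)⁻¹ b, by simpa using hab, ?_⟩
    rw [dual, hswap, Equiv.swap_apply_apply]
    group
  · rw [← prefixProd_length, prefixProd_dual_length, prefixProd_length, hF.2]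

lemma tcount_dual {n : ℕ} (F : Fin (n - 1) → Equiv.Perm (Fin n)) (x : Fin n) :
    Tcount (dual F) x = Mcount F x := by
  simp only [Tcount, dual_apply_ne_iff]
  exact card_filter_rev (fun k => prefixProd F k x ≠ prefixProd F (k + 1) x)

lemma mcount_dual {n : ℕ} {F : Fin (n - 1) → Equiv.Perm (Fin n)} (hF : IsMinFact n F)
    (x : Fin n) : Mcount (dual F) x = Tcount F (finRotate n x) := by
  have hprod : prefixProd F (n - 1) = finRotate n := by rw [prefixProd_length, hF.2]
  change #{k : Fin (n - 1) | prefixProd (dual F) k x ≠ prefixProd (dual F) (k + 1) x} = _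
  simp only [prefixProd_dual_apply_ne_iff, hprod]
  exact card_filter_rev (fun k => F k (finRotate n x) ≠ finRotate n x)

lemma val_finRotate_of_val_eq_cyclic_pred {n i : ℕ} (h1 : 1 ≤ i) (h2 : i ≤ n) (j : Fin n)
    (hj : (j : ℕ) = if i = 1 then n - 1 else i - 2) : (finRotate n j : ℕ) = i - 1 := by
  obtain ⟨m, rfl⟩ : ∃ m, n = m + 1 := ⟨n - 1, by omega⟩
  simp only [coe_finRotate, Fin.ext_iff, Fin.val_last]
  split_ifs at hj ⊢ <;> omega

/-- there is a bijection `B` of the set of minimal factorizations of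
size `n` such that for every `F` and every `1 ≤ i ≤ n`, `M_i(F) = T_i(B F)` and
`T_i(F) = M_{i-1}(B F)`, where the index `i-1` is taken to be `n` when `i = 1`
(element `i` of `{1,…,n}` is the index `i-1 : Fin n`). -/
theorem exists_duality_bijection (n : ℕ) :
    ∃ B : {F : Fin (n - 1) → Equiv.Perm (Fin n) // IsMinFact n F} ≃
          {F : Fin (n - 1) → Equiv.Perm (Fin n) // IsMinFact n F},
      ∀ F, ∀ i (h1 : 1 ≤ i) (h2 : i ≤ n),
        Mcount F.val ⟨i - 1, by omega⟩ = Tcount (B F).val ⟨i - 1, by omega⟩ ∧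
        Tcount F.val ⟨i - 1, by omega⟩ =
          Mcount (B F).val ⟨if i = 1 then n - 1 else i - 2, by split <;> omega⟩ := by
  let B : {F // IsMinFact n F} → {F // IsMinFact n F} := fun F => ⟨dual F, isMinFact_dual F.2⟩
  have hB : Function.Injective B := fun F G h =>
    Subtype.ext (dual_injective (congrArg Subtype.val h))
  refine ⟨Equiv.ofBijective B hB.bijective_of_finite, fun F i h1 h2 => ⟨?_, ?_⟩⟩
  · exact (tcount_dual F.1 _).symm
  · simp only [Equiv.ofBijective_apply, B, mcount_dual F.2]
    exact congrArg _ (Fin.ext (val_finRotate_of_val_eq_cyclic_pred h1 h2 _ rfl)).symm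
end
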